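/- arXiv:2311.11414 — 3 statements merged into one kernel-verified Lean document; each statement's English description precedes it below -/
import Mathlib

section
/- Let K be a compact Hausdorff space, ι an uncountable type, and U : ι → Set K a family of pairwise disjoint nonempty clopen subsets of K such that each U α admits a Cantor scheme of clopen subsets of K with A [] = U α. Let 𝒫 : Set (Set ℝ) be a family of compact subsets of ℝ with {0} ∉ 𝒫, and assume there exists P ∈ 𝒫 such that for every sequence c : ℕ → ℝ tending to 0 (Tendsto c atTop (nhds 0)) with c not identically zero, the set (⋃ i, c i • P) ∪ {0} belongs to 𝒫. Then there exists a linear isometry T : c₀(ι) →ₗᵢ C(K, ℝ) such that Set.range (T g) ∈ 𝒫 for every g ≠ 0. -/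
/-!
A Cantor scheme on `U α` gives a continuous map `K → (ℕ → Bool)` sending `U α` onto the Cantor
space, and composing with a Hausdorff–Alexandroff surjection yields, for any nonempty compact
`Q ⊆ ℝ`, a continuous `h α` vanishing off `U α` with `h α '' U α = Q`. Rescale `P` to
`Q = r • P ⊆ [-1, 1]` with a point of modulus `1`. Since the `U α` are disjoint,
`T g = ∑ α, g α • h α` has a single term at each point, so `T` is a linear isometry
`c₀(ι) → C(K)` with range `(⋃ α, (g α * r) • P) ∪ {0}`; the value `0` is attained because
infinitely many disjoint nonempty open sets cannot cover the compact `K`. Finally `g` has countable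
support and vanishes at infinity, so an injective enumeration of its support gives a null sequence
`c` with the same nonzero values, and then the range is `(⋃ i, c i • P) ∪ {0} ∈ Pfam`.
-/

open scoped ZeroAtInfty Pointwise

/-- A Cantor scheme of clopen subsets of `X ⊆ K`. -/
def IsClopenCantorScheme {K : Type*} [TopologicalSpace K] (X : Set K)
    (A : List Bool → Set K) : Prop :=
  A [] = X ∧ (∀ s, (A s).Nonempty) ∧ (∀ s, IsClopen (A s)) ∧
    (∀ (s : List Bool) (i : Bool), A (s ++ [i]) ⊆ A s) ∧
    ∀ s : List Bool, A (s ++ [false]) ∩ A (s ++ [true]) = ∅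

open Filter Function Set Topology

lemma IsClopen.eventually_mem_iff {K : Type*} [TopologicalSpace K] {S : Set K} (hS : IsClopen S)
    (x : K) : ∀ᶠ y in 𝓝 x, (y ∈ S ↔ x ∈ S) := by
  by_cases hx : x ∈ S
  · filter_upwards [hS.isOpen.mem_nhds hx] with y hy using iff_of_true hy hx
  · filter_upwards [hS.isClosed.isOpen_compl.mem_nhds hx] with y hy using iff_of_false hy hx

namespace IsClopenCantorScheme

variable {K : Type*} {X : Set K} {A : List Bool → Set K}

open Classical in
/-- Descend the scheme, turning right exactly when `x` lies in the right child. Points that fall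
out of both children are still coded, which makes `code A` continuous on all of `K`. -/
noncomputable def codePrefix (A : List Bool → Set K) (x : K) : ℕ → List Bool
  | 0 => []
  | n + 1 => codePrefix A x n ++ [decide (x ∈ A (codePrefix A x n ++ [true]))]

open Classical in
noncomputable def code (A : List Bool → Set K) (x : K) (n : ℕ) : Bool :=
  decide (x ∈ A (codePrefix A x n ++ [true]))

lemma codePrefix_succ (x : K) (n : ℕ) :
    codePrefix A x (n + 1) = codePrefix A x n ++ [code A x n] := rfl

lemma codePrefix_eq_ofFn (x : K) : ∀ n, codePrefix A x n = List.ofFn fun i : Fin n ↦ code A x i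
  | 0 => rfl
  | n + 1 => by
    rw [codePrefix_succ, codePrefix_eq_ofFn x n, List.ofFn_succ', List.concat_eq_append]; rfl

variable [TopologicalSpace K]

lemma nonempty (hA : IsClopenCantorScheme X A) (s : List Bool) : (A s).Nonempty := hA.2.1 s

lemma isClopen (hA : IsClopenCantorScheme X A) (s : List Bool) : IsClopen (A s) := hA.2.2.1 s

lemma append_subset (hA : IsClopenCantorScheme X A) (s : List Bool) (b : Bool) :
    A (s ++ [b]) ⊆ A s :=
  hA.2.2.2.1 s b

lemma disjoint (hA : IsClopenCantorScheme X A) (s : List Bool) :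
    Disjoint (A (s ++ [false])) (A (s ++ [true])) :=
  Set.disjoint_iff_inter_eq_empty.2 (hA.2.2.2.2 s)

lemma isClopen_base (hA : IsClopenCantorScheme X A) : IsClopen X := hA.1 ▸ hA.isClopen []

lemma subset (hA : IsClopenCantorScheme X A) (s : List Bool) : A s ⊆ X := by
  induction s using List.reverseRecOn with
  | nil => exact hA.1.subset
  | append_singleton s b ih => exact (hA.append_subset s b).trans ih

lemma codePrefix_of_mem (hA : IsClopenCantorScheme X A) {x : K} :
    ∀ {s : List Bool}, x ∈ A s → codePrefix A x s.length = s := by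
  intro s
  induction s using List.reverseRecOn with
  | nil => intro; rfl
  | append_singleton s b ih =>
    intro hx
    have hs : codePrefix A x s.length = s := ih (hA.append_subset s b hx)
    rw [List.length_append, List.length_singleton, codePrefix_succ, hs, code, hs]
    cases b
    · simp [(hA.disjoint s).notMem_of_mem_left hx]
    · simpa using hx

lemma code_eq_of_mem_ofFn (hA : IsClopenCantorScheme X A) {x : K} {b : ℕ → Bool} {n : ℕ}
    (hx : x ∈ A (List.ofFn fun i : Fin n ↦ b i)) {i : ℕ} (hi : i < n) : code A x i = b i := by
  have h := hA.codePrefix_of_mem hx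
  rw [List.length_ofFn, codePrefix_eq_ofFn] at h
  exact congrFun (List.ofFn_inj.1 h) ⟨i, hi⟩

lemma eventually_code_eq (hA : IsClopenCantorScheme X A) {x : K} {n : ℕ}
    (h : ∀ᶠ y in 𝓝 x, codePrefix A y n = codePrefix A x n) :
    ∀ᶠ y in 𝓝 x, code A y n = code A x n := by
  filter_upwards [h, (hA.isClopen (codePrefix A x n ++ [true])).eventually_mem_iff x] with y hy hyx
  rw [code, code, hy]
  exact decide_eq_decide.2 hyx

lemma eventually_codePrefix_eq (hA : IsClopenCantorScheme X A) (x : K) :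
    ∀ n, ∀ᶠ y in 𝓝 x, codePrefix A y n = codePrefix A x n
  | 0 => .of_forall fun _ ↦ rfl
  | n + 1 => by
    have ih := hA.eventually_codePrefix_eq x n
    filter_upwards [ih, hA.eventually_code_eq ih] with y hy hcode
    rw [codePrefix_succ, codePrefix_succ, hy, hcode]

lemma continuous_code (hA : IsClopenCantorScheme X A) : Continuous (code A) :=
  continuous_pi fun n ↦ IsLocallyConstant.continuous <|
    (IsLocallyConstant.iff_eventually_eq _).2 fun x ↦
      hA.eventually_code_eq (hA.eventually_codePrefix_eq x n)

lemma surjOn_code [CompactSpace K] (hA : IsClopenCantorScheme X A) : SurjOn (code A) X univ := by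
  intro b _
  set t : ℕ → Set K := fun n ↦ X ∩ {x | ∀ i < n, code A x i = b i}
  have hclosed : ∀ n, IsClosed (t n) := by
    intro n
    refine hA.isClopen_base.isClosed.inter ?_
    simp only [ofPred_forall]
    exact isClosed_biInter fun i _ ↦ isClosed_eq ((continuous_apply i).comp hA.continuous_code)
      continuous_const
  have hne : ∀ n, (t n).Nonempty := by
    intro n
    obtain ⟨x, hx⟩ := hA.nonempty (List.ofFn fun i : Fin n ↦ b i)
    exact ⟨x, hA.subset _ hx, fun i hi ↦ hA.code_eq_of_mem_ofFn hx hi⟩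
  obtain ⟨x, hx⟩ := (hclosed 0).isCompact.nonempty_iInter_of_sequence_nonempty_isCompact_isClosed t
    (fun n ↦ inter_subset_inter_right _ fun x hx i hi ↦ hx i (Nat.lt_succ_of_lt hi)) hne hclosed
  simp only [mem_iInter] at hx
  exact ⟨x, (hx 0).1, funext fun i ↦ (hx (i + 1)).2 i (Nat.lt_succ_self i)⟩

theorem exists_continuous_image_eq [CompactSpace K] (hA : IsClopenCantorScheme X A)
    {Y : Type*} [MetricSpace Y] [Zero Y] {Q : Set Y} (hQ : IsCompact Q) (hQne : Q.Nonempty) :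
    ∃ f : K → Y, Continuous f ∧ (∀ x ∉ X, f x = 0) ∧ f '' X = Q := by
  have : CompactSpace Q := isCompact_iff_compactSpace.1 hQ
  have : Nonempty Q := hQne.to_subtype
  obtain ⟨ψ, hψc, hψs⟩ := exists_nat_bool_continuous_surjective_of_compact Q
  refine ⟨X.indicator fun x ↦ ψ (code A x), hA.isClopen_base.continuous_indicator
    (continuous_subtype_val.comp (hψc.comp hA.continuous_code)), fun x hx ↦
    indicator_of_notMem hx _, ?_⟩
  rw [image_congr fun x hx ↦ indicator_of_mem hx _]
  change (Subtype.val ∘ ψ ∘ code A) '' X = Q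
  rw [image_comp, image_comp,
    hA.surjOn_code.image_eq_of_mapsTo (mapsTo_univ _ _), image_univ_of_surjective hψs,
    image_univ, Subtype.range_coe]

end IsClopenCantorScheme

namespace ZeroAtInftyContinuousMap

variable {ι : Type*} [TopologicalSpace ι]

lemma abs_apply_le_norm (g : C₀(ι, ℝ)) (α : ι) : |g α| ≤ ‖g‖ := by
  rw [← norm_toBCF_eq_norm]
  exact g.toBCF.norm_coe_le_norm α

lemma tendsto_cofinite [DiscreteTopology ι] (g : C₀(ι, ℝ)) : Tendsto g cofinite (𝓝 0) :=
  cocompact_eq_cofinite ι ▸ g.zero_at_infty'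

end ZeroAtInftyContinuousMap

section DisjointSum

variable {K ι : Type*} {U : ι → Set K} {h : ι → K → ℝ}

noncomputable def disjointSum (h : ι → K → ℝ) (g : ι → ℝ) (x : K) : ℝ := ∑' α, g α * h α x

lemma exists_forall_ne_apply_eq_zero [Nonempty ι] (hU : Pairwise (Disjoint on U))
    (hsupp : ∀ α, ∀ x ∉ U α, h α x = 0) (x : K) : ∃ α, ∀ β ≠ α, h β x = 0 := by
  by_cases hx : ∃ α, x ∈ U α
  · obtain ⟨α, hα⟩ := hx
    exact ⟨α, fun β hβ ↦ hsupp β x fun hxβ ↦ (hU hβ).notMem_of_mem_left hxβ hα⟩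
  · push Not at hx
    exact ⟨Classical.arbitrary ι, fun β _ ↦ hsupp β x (hx β)⟩

lemma disjointSum_eq_of_forall_ne {x : K} {α : ι} (hα : ∀ β ≠ α, h β x = 0) (g : ι → ℝ) :
    disjointSum h g x = g α * h α x :=
  tsum_eq_single α fun β hβ ↦ by rw [hα β hβ, mul_zero]

lemma disjointSum_of_mem (hU : Pairwise (Disjoint on U)) (hsupp : ∀ α, ∀ x ∉ U α, h α x = 0)
    {x : K} {α : ι} (hx : x ∈ U α) (g : ι → ℝ) : disjointSum h g x = g α * h α x :=
  disjointSum_eq_of_forall_ne (fun β hβ ↦ hsupp β x fun hxβ ↦ (hU hβ).notMem_of_mem_left hxβ hx) g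

lemma disjointSum_of_forall_notMem (hsupp : ∀ α, ∀ x ∉ U α, h α x = 0) {x : K}
    (hx : ∀ α, x ∉ U α) (g : ι → ℝ) : disjointSum h g x = 0 := by
  simp [disjointSum, hsupp _ x (hx _)]

lemma range_disjointSum (hU : Pairwise (Disjoint on U)) (hsupp : ∀ α, ∀ x ∉ U α, h α x = 0)
    (hout : ∃ x, ∀ α, x ∉ U α) (g : ι → ℝ) :
    range (disjointSum h g) = (⋃ α, g α • (h α '' U α)) ∪ {0} := by
  apply Subset.antisymm
  · rintro _ ⟨x, rfl⟩
    by_cases hx : ∃ α, x ∈ U α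
    · obtain ⟨α, hα⟩ := hx
      rw [disjointSum_of_mem hU hsupp hα]
      exact Or.inl (mem_iUnion.2 ⟨α, smul_mem_smul_set (mem_image_of_mem _ hα)⟩)
    · push Not at hx
      exact Or.inr (disjointSum_of_forall_notMem hsupp hx g)
  · rintro _ (hy | rfl)
    · obtain ⟨α, _, ⟨x, hx, rfl⟩, rfl⟩ := mem_iUnion.1 hy
      exact ⟨x, disjointSum_of_mem hU hsupp hx g⟩
    · obtain ⟨x, hx⟩ := hout
      exact ⟨x, disjointSum_of_forall_notMem hsupp hx g⟩

lemma abs_disjointSum_le [TopologicalSpace ι] [Nonempty ι] (hU : Pairwise (Disjoint on U))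
    (hsupp : ∀ α, ∀ x ∉ U α, h α x = 0) (hle : ∀ α x, |h α x| ≤ 1) (g : C₀(ι, ℝ)) (x : K) :
    |disjointSum h g x| ≤ ‖g‖ := by
  obtain ⟨α, hα⟩ := exists_forall_ne_apply_eq_zero hU hsupp x
  rw [disjointSum_eq_of_forall_ne hα, abs_mul]
  exact (mul_le_of_le_one_right (abs_nonneg _) (hle α x)).trans (g.abs_apply_le_norm α)

variable [TopologicalSpace K] [TopologicalSpace ι] [DiscreteTopology ι]

lemma continuous_disjointSum [Nonempty ι] (hU : Pairwise (Disjoint on U))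
    (hUc : ∀ α, IsClopen (U α)) (hh : ∀ α, Continuous (h α))
    (hsupp : ∀ α, ∀ x ∉ U α, h α x = 0) (hle : ∀ α x, |h α x| ≤ 1) (g : C₀(ι, ℝ)) :
    Continuous (disjointSum h g) := by
  refine continuous_iff_continuousAt.2 fun x ↦ ?_
  by_cases hx : ∃ α, x ∈ U α
  · obtain ⟨α, hα⟩ := hx
    refine ((continuous_const.mul (hh α)).continuousAt (f := fun y ↦ g α * h α y)).congr ?_
    filter_upwards [(hUc α).isOpen.mem_nhds hα] with y hy
    exact (disjointSum_of_mem hU hsupp hy g).symm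
  · push Not at hx
    rw [ContinuousAt, disjointSum_of_forall_notMem hsupp hx, Metric.tendsto_nhds]
    intro ε hε
    -- only the finitely many `α` with `ε ≤ |g α|` have to be avoided
    have hfin : {α | ε ≤ |g α|}.Finite := by
      simpa [Real.dist_eq] using Metric.tendsto_nhds.1 g.tendsto_cofinite ε hε
    have hV : IsOpen (⋂ α ∈ {α | ε ≤ |g α|}, (U α)ᶜ) :=
      hfin.isOpen_biInter fun α _ ↦ (hUc α).isClosed.isOpen_compl
    filter_upwards [hV.mem_nhds (mem_iInter₂.2 fun α _ ↦ hx α)] with y hy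
    obtain ⟨β, hβ⟩ := exists_forall_ne_apply_eq_zero hU hsupp y
    rw [Real.dist_0_eq_abs, disjointSum_eq_of_forall_ne hβ, abs_mul]
    by_cases hgβ : ε ≤ |g β|
    · rw [hsupp β y (mem_iInter₂.1 hy β hgβ), abs_zero, mul_zero]
      exact hε
    · exact (mul_le_of_le_one_right (abs_nonneg _) (hle β y)).trans_lt (not_le.1 hgβ)

noncomputable def disjointSumIsometry [CompactSpace K] [Nonempty ι] (hU : Pairwise (Disjoint on U))
    (hUc : ∀ α, IsClopen (U α)) (hh : ∀ α, Continuous (h α))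
    (hsupp : ∀ α, ∀ x ∉ U α, h α x = 0) (hle : ∀ α x, |h α x| ≤ 1) (hone : ∀ α, ∃ x, |h α x| = 1) :
    C₀(ι, ℝ) →ₗᵢ[ℝ] C(K, ℝ) where
  toFun g := ⟨disjointSum h g, continuous_disjointSum hU hUc hh hsupp hle g⟩
  map_add' g g' := by
    ext x
    obtain ⟨α, hα⟩ := exists_forall_ne_apply_eq_zero hU hsupp x
    simp [disjointSum_eq_of_forall_ne hα, add_mul]
  map_smul' a g := by
    ext x
    obtain ⟨α, hα⟩ := exists_forall_ne_apply_eq_zero hU hsupp x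
    simp [disjointSum_eq_of_forall_ne hα, mul_assoc]
  norm_map' g := by
    refine le_antisymm ((ContinuousMap.norm_le _ (norm_nonneg g)).2 fun x ↦
      abs_disjointSum_le hU hsupp hle g x) ?_
    rw [← ZeroAtInftyContinuousMap.norm_toBCF_eq_norm]
    refine (BoundedContinuousFunction.norm_le (norm_nonneg _)).2 fun α ↦ ?_
    obtain ⟨x, hx⟩ := hone α
    have hxU : x ∈ U α := by
      by_contra hxU
      simp [hsupp α x hxU] at hx
    calc ‖g.toBCF α‖ = |disjointSum h g x| := by
          rw [disjointSum_of_mem hU hsupp hxU, abs_mul, hx, mul_one]; rfl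
      _ ≤ _ := ContinuousMap.norm_coe_le_norm
        ⟨disjointSum h g, continuous_disjointSum hU hUc hh hsupp hle g⟩ x

end DisjointSum

lemma Function.Injective.tendsto_extend_zero_cofinite {α β E : Type*} [TopologicalSpace E]
    [Zero E] {f : α → β} (hf : Injective f) {v : α → E} (hv : Tendsto v cofinite (𝓝 0)) :
    Tendsto (extend f v 0) cofinite (𝓝 0) := by
  intro N hN
  refine ((hv hN).image f).subset fun n hn ↦ ?_
  by_cases hn' : ∃ a, f a = n
  · obtain ⟨a, rfl⟩ := hn'
    exact ⟨a, by simpa [hf.extend_apply] using hn, rfl⟩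
  · have hcn : extend f v 0 n = 0 := extend_apply' _ _ _ hn'
    exact absurd (show extend f v 0 n ∈ N from hcn ▸ mem_of_mem_nhds hN) hn

lemma exists_seq_tendsto_zero_insert_range_eq {ι E : Type*} [TopologicalSpace E] [T1Space E]
    [FirstCountableTopology E] [Zero E] {u : ι → E} (hu : Tendsto u cofinite (𝓝 0))
    (hu0 : u ≠ 0) :
    ∃ c : ℕ → E, Tendsto c atTop (𝓝 0) ∧ c ≠ 0 ∧ insert 0 (range c) = insert 0 (range u) := by
  have hS : (support u).Countable := by
    refine hu.countable_compl_preimage_ker.mono fun α hα ↦ ?_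
    simpa [ker_nhds] using hα
  obtain ⟨f, hf⟩ := Set.countable_iff_exists_injective.1 hS
  set c : ℕ → E := extend f (fun a ↦ u a) 0
  have hcf : ∀ a, c (f a) = u a := hf.extend_apply _ _
  have hrange : insert 0 (range c) = insert 0 (range u) := by
    refine Subset.antisymm (insert_subset (mem_insert _ _) ?_) (insert_subset (mem_insert _ _) ?_)
    · rintro _ ⟨n, rfl⟩
      by_cases hn : ∃ a, f a = n
      · obtain ⟨a, rfl⟩ := hn
        exact Or.inr ⟨a, (hcf a).symm⟩
      · exact Or.inl (extend_apply' _ _ _ hn)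
    · rintro _ ⟨α, rfl⟩
      by_cases hα : u α = 0
      · exact Or.inl hα
      · exact Or.inr ⟨f ⟨α, hα⟩, hcf _⟩
  refine ⟨c, Nat.cofinite_eq_atTop ▸ hf.tendsto_extend_zero_cofinite
    (hu.comp Subtype.val_injective.tendsto_cofinite), fun hc ↦ ?_, hrange⟩
  obtain ⟨α, hα⟩ := ne_iff.1 hu0
  have : u α ∈ insert 0 (range c) := hrange ▸ mem_insert_of_mem _ ⟨α, rfl⟩
  rw [hc, range_zero] at this
  exact hα (by simpa using this)

section SMulWithZero

variable {R M : Type*} [Zero R] [Zero M] [SMulWithZero R M]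

lemma iUnion_smul_union_zero_eq_biUnion {ι : Type*} (c : ι → R) (P : Set M) :
    (⋃ i, c i • P) ∪ {0} = (⋃ t ∈ insert 0 (range c), t • P) ∪ {0} := by
  have h0 : (0 : R) • P ⊆ {0} := zero_smul_set_subset P
  rw [biUnion_insert, biUnion_range, union_comm ((0 : R) • P), union_assoc,
    union_eq_self_of_subset_left h0]

lemma iUnion_smul_union_zero_congr {ι κ : Type*} {c : ι → R} {d : κ → R}
    (h : insert 0 (range c) = insert 0 (range d)) (P : Set M) :
    (⋃ i, c i • P) ∪ {0} = (⋃ j, d j • P) ∪ {0} := by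
  rw [iUnion_smul_union_zero_eq_biUnion, iUnion_smul_union_zero_eq_biUnion d, h]

end SMulWithZero

lemma IsCompact.exists_smul_subset_closedBall_one {E : Type*} [NormedAddCommGroup E]
    [NormedSpace ℝ E] {P : Set E} (hP : IsCompact P) (hP0 : ∃ p ∈ P, p ≠ 0) :
    ∃ r : ℝ, 0 < r ∧ r • P ⊆ Metric.closedBall 0 1 ∧ ∃ q ∈ r • P, ‖q‖ = 1 := by
  obtain ⟨p, hp, hp0⟩ := hP0
  obtain ⟨p₀, hp₀, hmax⟩ := hP.exists_isMaxOn ⟨p, hp⟩ continuous_norm.continuousOn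
  have hM : 0 < ‖p₀‖ := (norm_pos_iff.2 hp0).trans_le (hmax hp)
  refine ⟨‖p₀‖⁻¹, inv_pos.2 hM, ?_, ⟨_, smul_mem_smul_set hp₀, ?_⟩⟩
  · rintro _ ⟨x, hx, rfl⟩
    rw [mem_closedBall_zero_iff, norm_smul, norm_inv, norm_norm]
    exact inv_mul_le_one_of_le₀ (hmax hx) hM.le
  · rw [norm_smul, norm_inv, norm_norm, inv_mul_cancel₀ hM.ne']

lemma exists_forall_notMem_of_pairwise_disjoint {K ι : Type*} [TopologicalSpace K]
    [CompactSpace K] [Infinite ι] {U : ι → Set K} (hU : Pairwise (Disjoint on U))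
    (hUo : ∀ α, IsOpen (U α)) (hne : ∀ α, (U α).Nonempty) : ∃ x, ∀ α, x ∉ U α := by
  by_contra! hcover
  obtain ⟨t, ht⟩ := isCompact_univ.elim_finite_subcover U hUo fun x _ ↦ mem_iUnion.2 (hcover x)
  obtain ⟨β, hβ⟩ := Infinite.exists_notMem_finset t
  obtain ⟨y, hy⟩ := hne β
  obtain ⟨α, hα, hyα⟩ := mem_iUnion₂.1 (ht (mem_univ y))
  exact (hU (ne_of_mem_of_not_mem hα hβ)).notMem_of_mem_left hyα hy

theorem stmt2_general {K : Type*} [TopologicalSpace K] [CompactSpace K]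
    {ι : Type*} [TopologicalSpace ι] [DiscreteTopology ι] [Uncountable ι]
    (U : ι → Set K) (hne : ∀ α, (U α).Nonempty) (hclopen : ∀ α, IsClopen (U α))
    (hdisj : ∀ α β, α ≠ β → Disjoint (U α) (U β))
    (hscheme : ∀ α, ∃ A : List Bool → Set K, IsClopenCantorScheme (U α) A)
    (Pfam : Set (Set ℝ)) (hPcompact : ∀ P ∈ Pfam, IsCompact P) (h0 : ({0} : Set ℝ) ∉ Pfam)
    (hP : ∃ P ∈ Pfam, ∀ c : ℕ → ℝ, Filter.Tendsto c Filter.atTop (nhds 0) → c ≠ 0 →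
      ((⋃ i : ℕ, c i • P) ∪ {0}) ∈ Pfam) :
    ∃ T : C₀(ι, ℝ) →ₗᵢ[ℝ] C(K, ℝ),
      ∀ g : C₀(ι, ℝ), g ≠ 0 → Set.range (T g) ∈ Pfam := by
  obtain ⟨P, hPmem, hPseq⟩ := hP
  have hP0 : ∃ p ∈ P, p ≠ 0 := by
    by_contra! hP0
    rcases subset_singleton_iff_eq.1 hP0 with rfl | rfl
    · have hc : (fun n : ℕ ↦ 1 / ((n : ℝ) + 1)) ≠ 0 := fun h ↦ by simpa using congrFun h 0
      exact h0 (by simpa using hPseq _ tendsto_one_div_add_atTop_nhds_zero_nat hc)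
    · exact h0 hPmem
  obtain ⟨r, hr, hrP, q, hq, hq1⟩ := (hPcompact P hPmem).exists_smul_subset_closedBall_one hP0
  choose h hhc hh0 hhP using fun α ↦
    (hscheme α).choose_spec.exists_continuous_image_eq ((hPcompact P hPmem).smul r) ⟨q, hq⟩
  have hU : Pairwise (Disjoint on U) := fun α β ↦ hdisj α β
  have hle : ∀ α x, |h α x| ≤ 1 := by
    intro α x
    by_cases hx : x ∈ U α
    · simpa using hrP (hhP α ▸ mem_image_of_mem (h α) hx)
    · simp [hh0 α x hx]
  have hone : ∀ α, ∃ x, |h α x| = 1 := by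
    intro α
    obtain ⟨x, -, hx⟩ := hhP α ▸ hq
    exact ⟨x, by simpa [hx] using hq1⟩
  refine ⟨disjointSumIsometry hU hclopen hhc hh0 hle hone, fun g hg ↦ ?_⟩
  obtain ⟨c, hc, hc0, hcg⟩ := exists_seq_tendsto_zero_insert_range_eq
    (u := fun α ↦ g α * r) (by simpa using g.tendsto_cofinite.mul_const r) fun hgr ↦
      hg (ZeroAtInftyContinuousMap.ext fun α ↦ by simpa [hr.ne'] using congrFun hgr α)
  change range (disjointSum h g) ∈ Pfam
  rw [range_disjointSum hU hh0 (exists_forall_notMem_of_pairwise_disjoint hU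
    (fun α ↦ (hclopen α).isOpen) hne)]
  simp_rw [hhP, smul_smul]
  rw [← iUnion_smul_union_zero_congr hcg P]
  exact hPseq c hc hc0

/-- Let `K` be compact Hausdorff, `ι` uncountable, `U : ι → Set K` pairwise
disjoint nonempty clopen sets each admitting a Cantor scheme of clopen sets. If `Pfam` is a family
of compact subsets of `ℝ` with `{0} ∉ Pfam` containing some `P` such that
`(⋃ i, c i • P) ∪ {0} ∈ Pfam` for each not-identically-zero null sequence `c`, then
`{f ∈ C(K, ℝ) | range f ∈ Pfam} ∪ {0}` contains an isometric copy of `c₀(ι)`. -/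
theorem stmt2 {K : Type*} [TopologicalSpace K] [CompactSpace K] [T2Space K]
    {ι : Type*} [TopologicalSpace ι] [DiscreteTopology ι] [Uncountable ι]
    (U : ι → Set K) (hne : ∀ α, (U α).Nonempty) (hclopen : ∀ α, IsClopen (U α))
    (hdisj : ∀ α β, α ≠ β → Disjoint (U α) (U β))
    (hscheme : ∀ α, ∃ A : List Bool → Set K, IsClopenCantorScheme (U α) A)
    (Pfam : Set (Set ℝ)) (hPcompact : ∀ P ∈ Pfam, IsCompact P) (h0 : ({0} : Set ℝ) ∉ Pfam)
    (hP : ∃ P ∈ Pfam, ∀ c : ℕ → ℝ, Filter.Tendsto c Filter.atTop (nhds 0) → c ≠ 0 →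
      ((⋃ i : ℕ, c i • P) ∪ {0}) ∈ Pfam) :
    ∃ T : C₀(ι, ℝ) →ₗᵢ[ℝ] C(K, ℝ),
      ∀ g : C₀(ι, ℝ), g ≠ 0 → Set.range (T g) ∈ Pfam :=
  stmt2_general U hne hclopen hdisj hscheme Pfam hPcompact h0 hP
end

section
/- Let I be an ideal on ℕ which has the Baire property. Then there exists a linear isometry T : C(βℕ∖ℕ, ℝ) →ₗᵢ C(↥P_I, ℝ) such that for every g ≠ 0 the range of T g is a nondegenerate closed interval: there exist a b : ℝ with a < b and Set.range (T g) = Set.Icc a b. (In other words, the set of functions in C(P_I) whose range is an interval, together with 0, contains a subspace isometric to C(βℕ∖ℕ).) -/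
open scoped ENNReal

/-- The remainder `βℕ∖ℕ` of the Stone–Čech compactification of `ℕ`: the set of nonprincipal
ultrafilters on `ℕ`, as a subspace of `Ultrafilter ℕ`. -/
def betaNRemainder : Set (Ultrafilter ℕ) := (Set.range (pure : ℕ → Ultrafilter ℕ))ᶜ

lemma isOpen_range_pure : IsOpen (Set.range (pure : ℕ → Ultrafilter ℕ)) := by
  have h : Set.range (pure : ℕ → Ultrafilter ℕ)
      = ⋃ n : ℕ, {u : Ultrafilter ℕ | ({n} : Set ℕ) ∈ u} := by
    ext u
    simp only [Set.mem_range, Set.mem_iUnion, Set.mem_setOf_eq]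
    constructor
    · rintro ⟨n, rfl⟩
      exact ⟨n, by simp⟩
    · rintro ⟨n, hn⟩
      obtain ⟨x, hx, rfl⟩ := Ultrafilter.eq_pure_of_finite_mem (Set.finite_singleton n) hn
      exact ⟨x, rfl⟩
  rw [h]
  exact isOpen_iUnion fun n => ultrafilter_isOpen_basic _

instance : CompactSpace ↥betaNRemainder := by
  rw [← isCompact_iff_compactSpace]
  exact isOpen_range_pure.isClosed_compl.isCompact


/-- `I` is an ideal on `ℕ`: closed under subsets and finite unions, contains singletons,
and does not contain `ℕ` itself. -/
def IsNatIdeal (I : Set (Set ℕ)) : Prop :=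
  (∀ A B : Set ℕ, A ⊆ B → B ∈ I → A ∈ I) ∧
  (∀ A B : Set ℕ, A ∈ I → B ∈ I → A ∪ B ∈ I) ∧
  (∀ n : ℕ, ({n} : Set ℕ) ∈ I) ∧
  (Set.univ : Set ℕ) ∉ I

/-- `P_I`: the set of ultrafilters on `ℕ` extending the filter dual to the ideal `I`. -/
def PI (I : Set (Set ℕ)) : Set (Ultrafilter ℕ) := {U : Ultrafilter ℕ | ∀ A ∈ I, Aᶜ ∈ U}

instance (I : Set (Set ℕ)) : CompactSpace ↥(PI I) := by
  rw [← isCompact_iff_compactSpace]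
  have h : PI I = ⋂ A ∈ I, {U : Ultrafilter ℕ | Aᶜ ∈ U} := by
    ext U; simp [PI]
  rw [h]
  exact (isClosed_biInter fun A _ => ultrafilter_isClosed_basic _).isCompact


/-- A set has the Baire property if it differs from an open set by a meagre set. -/
def HasBaireProperty {α : Type*} [TopologicalSpace α] (S : Set α) : Prop :=
  ∃ O : Set α, IsOpen O ∧ IsMeagre (symmDiff S O)

/-- An ideal on `ℕ` has the Baire property if the corresponding set of characteristic
functions has the Baire property in the Cantor space `ℕ → Bool`. -/
def IdealHasBaireProperty (I : Set (Set ℕ)) : Prop :=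
  HasBaireProperty {χ : ℕ → Bool | {n : ℕ | χ n = true} ∈ I}

/-!
An ideal with the Baire property is meagre: otherwise it would be comeagre in a basic open set,
which is preserved by flipping all coordinates outside a finite set, and the supports of a
generic point and of its flip would then be two members of `I` covering a cofinite set. By Talagrand's
theorem, `ℕ` then splits into finite intervals of which every member of `I` contains only
finitely many. Number the intervals `k = m ^ 2 + j` with `j ≤ 2 m` and put `p = m`,
`θ = j / m - 1` on the `k`-th one. Every nonprincipal `V` and every `t ∈ [-1, 1]` are then
realised as `(p(U), θ(U))` by some `U ∈ P_I`, so `T g = (g ∘ p) · θ` is an isometry with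
range `[-‖g‖, ‖g‖]`.
-/

open Set Filter Topology

namespace IsNatIdeal

variable {I : Set (Set ℕ)}

lemma empty_mem (hI : IsNatIdeal I) : ∅ ∈ I := hI.1 ∅ {0} (empty_subset _) (hI.2.2.1 0)

lemma mem_of_finite (hI : IsNatIdeal I) {A : Set ℕ} (hA : A.Finite) : A ∈ I := by
  induction A, hA using Set.Finite.induction_on with
  | empty => exact hI.empty_mem
  | @insert a A _ _ ih => exact insert_eq a A ▸ hI.2.1 _ _ (hI.2.2.1 a) ih

def dualFilter (hI : IsNatIdeal I) : Filter ℕ :=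
  Filter.comk (· ∈ I) hI.empty_mem (fun t ht s hst => hI.1 s t hst ht)
    (fun s hs t ht => hI.2.1 s t hs ht)

lemma compl_mem_dualFilter (hI : IsNatIdeal I) {A : Set ℕ} (hA : A ∈ I) : Aᶜ ∈ hI.dualFilter :=
  compl_mem_comk.2 hA

end IsNatIdeal

def flipOutside (F : Finset ℕ) : (ℕ → Bool) ≃ₜ (ℕ → Bool) :=
  Homeomorph.piCongrRight fun i =>
    if i ∈ F then Homeomorph.refl Bool else Equiv.boolNot.toHomeomorphOfDiscrete

lemma flipOutside_apply_of_mem {F : Finset ℕ} (χ : ℕ → Bool) {i : ℕ} (hi : i ∈ F) :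
    flipOutside F χ i = χ i := by
  simp [flipOutside, hi]

lemma compl_subset_union_flipOutside (F : Finset ℕ) (χ : ℕ → Bool) :
    (F : Set ℕ)ᶜ ⊆ {i | χ i = true} ∪ {i | flipOutside F χ i = true} := by
  intro i hi
  rw [mem_compl_iff, Finset.mem_coe] at hi
  cases h : χ i <;> simp [flipOutside, hi, h, Equiv.boolNot, Equiv.toHomeomorphOfDiscrete]

lemma IsNatIdeal.isMeagre_of_hasBaireProperty {I : Set (Set ℕ)} (hI : IsNatIdeal I)
    (hBP : IdealHasBaireProperty I) : IsMeagre {χ : ℕ → Bool | {n | χ n = true} ∈ I} := by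
  set S := {χ : ℕ → Bool | {n | χ n = true} ∈ I}
  obtain ⟨O, hO, hSO⟩ := hBP
  rcases O.eq_empty_or_nonempty with rfl | ⟨χ₀, hχ₀⟩
  · simpa [symmDiff] using hSO
  exfalso
  obtain ⟨F, u, hu, hCO⟩ := isOpen_pi_iff.1 hO χ₀ hχ₀
  set C := (F : Set ℕ).pi u
  have hC : IsOpen C := isOpen_set_pi F.finite_toSet fun i hi => (hu i hi).1
  have hflipC : ∀ χ ∈ C, flipOutside F χ ∈ C := fun χ hχ i hi =>
    (flipOutside_apply_of_mem χ hi).symm ▸ hχ i hi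
  have hmeagre : IsMeagre (symmDiff S O ∪ flipOutside F ⁻¹' symmDiff S O) :=
    hSO.union (hSO.preimage_of_isOpenMap (flipOutside F).continuous (flipOutside F).isOpenMap)
  obtain ⟨χ, hχC, hχ⟩ := nonempty_of_not_isMeagre fun h : IsMeagre (C \ _) =>
    not_isMeagre_of_isOpen hC ⟨χ₀, fun i hi => (hu i hi).2⟩
      ((hmeagre.union h).mono (by rw [union_sdiff_self]; exact subset_union_right))
  have mem_S : ∀ ψ ∈ C, ψ ∉ symmDiff S O → ψ ∈ S := fun ψ hψC hψ =>
    by_contra fun hψS => hψ (Or.inr ⟨hCO hψC, hψS⟩)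
  obtain ⟨hχ₁, hχ₂⟩ := not_or.1 hχ
  have hFc : (F : Set ℕ)ᶜ ∈ I := hI.1 _ _ (compl_subset_union_flipOutside F χ)
    (hI.2.1 _ _ (mem_S χ hχC hχ₁) (mem_S _ (hflipC χ hχC) hχ₂))
  exact hI.2.2.2 (union_compl_self (F : Set ℕ) ▸ hI.2.1 _ _ (hI.mem_of_finite F.finite_toSet) hFc)

open PiNat (cylinder mem_cylinder_iff isOpen_cylinder self_mem_cylinder)

section Cantor

variable {U : Set (ℕ → Bool)}

lemma exists_cylinder_subset_of_isOpen (hU : IsOpen U) {x : ℕ → Bool} (hx : x ∈ U) (n : ℕ) :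
    ∃ m, n ≤ m ∧ cylinder x m ⊆ U := by
  obtain ⟨_, ⟨y, m, rfl⟩, hxy, hyU⟩ :=
    (PiNat.isTopologicalBasis_cylinders _).exists_subset_of_mem_open hx hU
  refine ⟨max n m, le_max_left n m, (PiNat.cylinder_anti x (le_max_right n m)).trans ?_⟩
  rwa [PiNat.mem_cylinder_iff_eq.1 hxy]

lemma exists_cylinder_subset_of_dense (hU : IsOpen U) (hd : Dense U) (c : ℕ → Bool) (n : ℕ) :
    ∃ d ∈ cylinder c n, ∃ m, n ≤ m ∧ cylinder d m ⊆ U := by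
  obtain ⟨d, hdU, hdc⟩ := hd.exists_mem_open (isOpen_cylinder _ c n) ⟨c, self_mem_cylinder c n⟩
  exact ⟨d, hdc, exists_cylinder_subset_of_isOpen hU hdU n⟩

lemma exists_pattern_of_finite (hU : IsOpen U) (hd : Dense U) (n : ℕ) {P : Set (ℕ → Bool)}
    (hP : P.Finite) : ∃ m, n ≤ m ∧ ∃ d : ℕ → Bool,
      ∀ c ∈ P, ∀ χ ∈ cylinder c n, EqOn χ d (Ico n m) → χ ∈ U := by
  induction P, hP using Set.Finite.induction_on with
  | empty => exact ⟨n, le_rfl, fun _ => false, by simp⟩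
  | @insert c P _ _ ih =>
    obtain ⟨m, hnm, d, hpat⟩ := ih
    obtain ⟨d', hd'c, m', hmm', hd'U⟩ :=
      exists_cylinder_subset_of_dense hU hd (fun i => if i < n then c i else d i) m
    refine ⟨m', hnm.trans hmm', d', ?_⟩
    rintro c₀ (rfl | hc₀) χ hχ hχd'
    · refine hd'U (mem_cylinder_iff.2 fun i hi => ?_)
      by_cases hin : i < n
      · simp [mem_cylinder_iff.1 hχ i hin, mem_cylinder_iff.1 hd'c i (hin.trans_le hnm), hin]
      · exact hχd' ⟨not_lt.1 hin, hi⟩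
    · refine hpat c₀ hc₀ χ hχ fun i hi => ?_
      rw [hχd' ⟨hi.1, hi.2.trans_le hmm'⟩, mem_cylinder_iff.1 hd'c i hi.2, if_neg (not_lt.2 hi.1)]

lemma exists_pattern (hU : IsOpen U) (hd : Dense U) (n : ℕ) :
    ∃ m, n < m ∧ ∃ d : ℕ → Bool, ∀ χ, EqOn χ d (Ico n m) → χ ∈ U := by
  let ext : (Fin n → Bool) → ℕ → Bool := fun σ i => if h : i < n then σ ⟨i, h⟩ else false
  obtain ⟨m, hnm, d, hpat⟩ := exists_pattern_of_finite hU hd n (finite_range ext)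
  refine ⟨m + 1, Nat.lt_succ_of_le hnm, d, fun χ hχ => ?_⟩
  refine hpat _ ⟨fun i => χ i, rfl⟩ χ (mem_cylinder_iff.2 fun i hi => by simp [ext, hi]) ?_
  exact hχ.mono (Ico_subset_Ico_right m.le_succ)

end Cantor

/-- The partition of `ℕ` (into the fibres of `φ`) in Talagrand's characterization of meagre
ideals. -/
def IsTalagrandPartition (I : Set (Set ℕ)) (φ : ℕ → ℕ) : Prop :=
  (∀ k, (φ ⁻¹' {k}).Finite) ∧ ∀ A ∈ I, {k | φ ⁻¹' {k} ⊆ A}.Finite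

section IntervalIndex

variable {a : ℕ → ℕ} (ha : StrictMono a)

/-- The index `k` of the interval `[a k, a (k + 1))` containing `i`, where the first interval
is `[0, a 1)`. -/
def intervalIndex (i : ℕ) : ℕ :=
  Nat.find (⟨i, ha.le_apply.trans_lt (ha i.lt_succ_self)⟩ : ∃ k, i < a (k + 1))

include ha in
lemma lt_of_intervalIndex_eq {i k : ℕ} (h : intervalIndex ha i = k) : i < a (k + 1) :=
  h ▸ Nat.find_spec (p := fun k => i < a (k + 1)) _

lemma intervalIndex_eq {i k : ℕ} (h₁ : a k ≤ i) (h₂ : i < a (k + 1)) : intervalIndex ha i = k :=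
  (Nat.find_eq_iff _).2 ⟨h₂, fun _ hk => not_lt.2 ((ha.monotone hk).trans h₁)⟩

lemma finite_intervalIndex_fiber (k : ℕ) : (intervalIndex ha ⁻¹' {k}).Finite :=
  (finite_Iio (a (k + 1))).subset fun _ hi => lt_of_intervalIndex_eq ha hi

end IntervalIndex

theorem exists_isTalagrandPartition {I : Set (Set ℕ)} (hI : IsNatIdeal I)
    (hS : IsMeagre {χ : ℕ → Bool | {n | χ n = true} ∈ I}) : ∃ φ, IsTalagrandPartition I φ := by
  classical
  obtain ⟨G, hGS, hGδ, hGd⟩ := mem_residual.1 hS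
  obtain ⟨f, hfo, rfl⟩ := isGδ_iff_eq_iInter_nat.1 hGδ
  set W : ℕ → Set (ℕ → Bool) := fun k => ⋂ j ∈ Finset.range (k + 1), f j
  have hWo (k : ℕ) : IsOpen (W k) := isOpen_biInter_finset fun j _ => hfo j
  have hWd (k : ℕ) : Dense (W k) := hGd.mono (subset_iInter₂ fun j _ => iInter_subset f j)
  choose M hM D hD using fun k => exists_pattern (hWo k) (hWd k)
  let a : ℕ → ℕ := fun k => Nat.rec 0 (fun k ak => M k ak) k
  have ha : StrictMono a := strictMono_nat_of_lt_succ fun k => hM k (a k)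
  refine ⟨intervalIndex ha, finite_intervalIndex_fiber ha, fun A hA => ?_⟩
  by_contra hK
  set K := {k | intervalIndex ha ⁻¹' {k} ⊆ A}
  -- Its support lies in `A`, but it lies in `W k` for the infinitely many `k ∈ K`.
  let χ : ℕ → Bool := fun i =>
    decide (intervalIndex ha i ∈ K) && D (intervalIndex ha i) (a (intervalIndex ha i)) i
  have hχS : {i | χ i = true} ∈ I := hI.1 _ _
    (fun i hi => (of_decide_eq_true (Bool.and_eq_true_iff.1 hi).1 : _ ∈ K) rfl) hA
  have hχW (k : ℕ) (hk : k ∈ K) : χ ∈ W k := hD k (a k) χ fun i hi => by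
    simp only [χ, intervalIndex_eq ha hi.1 hi.2, decide_eq_true hk, Bool.true_and]
  refine hGS (mem_iInter.2 fun j => ?_) hχS
  obtain ⟨k, hk, hjk⟩ := Set.Infinite.exists_gt hK j
  exact mem_iInter₂.1 (hχW k hk) j (Finset.mem_range.2 (by omega))

/-- Writing `k = m ^ 2 + j` with `m = Nat.sqrt k` and `j ≤ 2 m`, the point `j / m - 1`; for
fixed `m ≥ 1` these points form a `1 / m`-net of `[-1, 1]`. -/
noncomputable def gridPoint (k : ℕ) : Icc (-1 : ℝ) 1 :=
  projIcc (-1) 1 (by norm_num) (((k : ℝ) - (Nat.sqrt k : ℝ) ^ 2) / Nat.sqrt k - 1)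

lemma exists_sqrt_eq_dist_gridPoint_le (t : Icc (-1 : ℝ) 1) {m : ℕ} (hm : 0 < m) :
    ∃ k, Nat.sqrt k = m ∧ dist (gridPoint k) t ≤ 1 / m := by
  have hm' : (0 : ℝ) < m := by exact_mod_cast hm
  set x := ((t : ℝ) + 1) * m
  have hx : 0 ≤ x := mul_nonneg (by linarith [t.2.1]) hm'.le
  have hj : ⌊x⌋₊ ≤ m + m := Nat.floor_le_of_le (by push_cast; nlinarith [t.2.2])
  have hsqrt : Nat.sqrt (m ^ 2 + ⌊x⌋₊) = m := Nat.sqrt_add_eq' m hj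
  refine ⟨m ^ 2 + ⌊x⌋₊, hsqrt, ?_⟩
  rw [Subtype.dist_eq, gridPoint, hsqrt, ← projIcc_val (by norm_num : (-1 : ℝ) ≤ 1) t,
    Real.dist_eq]
  refine (abs_projIcc_sub_projIcc _).trans ?_
  have hdiff : ((↑(m ^ 2 + ⌊x⌋₊) : ℝ) - (m : ℝ) ^ 2) / m - 1 - t = (⌊x⌋₊ - x) / m := by
    push_cast; field_simp; ring
  rw [hdiff, abs_div, abs_of_pos hm', div_le_div_iff_of_pos_right hm']
  exact abs_le.2 ⟨by linarith [Nat.lt_floor_add_one x], by linarith [Nat.floor_le hx]⟩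

lemma mem_betaNRemainder_iff {V : Ultrafilter ℕ} :
    V ∈ betaNRemainder ↔ ∀ A ∈ V, A.Infinite := by
  refine ⟨fun hV A hA hfin => ?_, fun h ⟨n, hn⟩ => h {n} (hn ▸ rfl) (finite_singleton n)⟩
  obtain ⟨n, -, rfl⟩ := Ultrafilter.eq_pure_of_finite_mem hfin hA
  exact hV ⟨n, rfl⟩

instance : Nonempty betaNRemainder :=
  ⟨⟨hyperfilter ℕ, mem_betaNRemainder_iff.2 fun _ hA hfin => notMem_hyperfilter_of_finite hfin hA⟩⟩

lemma PI_subset_betaNRemainder {I : Set (Set ℕ)} (hI : IsNatIdeal I) : PI I ⊆ betaNRemainder :=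
  fun _ hU => mem_betaNRemainder_iff.2 fun A hA hfin =>
    Ultrafilter.compl_notMem_iff.2 hA (hU A (hI.mem_of_finite hfin))

lemma Ultrafilter.map_mem_betaNRemainder {f : ℕ → ℕ} (hf : ∀ m, (f ⁻¹' {m}).Finite)
    {U : Ultrafilter ℕ} (hU : U ∈ betaNRemainder) : U.map f ∈ betaNRemainder :=
  mem_betaNRemainder_iff.2 fun _ hA hfin =>
    mem_betaNRemainder_iff.1 hU _ hA (hfin.preimage' fun m _ => hf m)

lemma Ultrafilter.continuous_map {α β : Type*} (f : α → β) : Continuous (Ultrafilter.map f) :=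
  continuous_generateFrom_iff.2 fun _ ⟨s, hs⟩ => hs ▸ ultrafilter_isOpen_basic (f ⁻¹' s)

namespace IsTalagrandPartition

variable {I : Set (Set ℕ)} {φ : ℕ → ℕ}

lemma finite_sqrt_comp_fiber (hφ : IsTalagrandPartition I φ) (m : ℕ) :
    ((Nat.sqrt ∘ φ) ⁻¹' {m}).Finite :=
  have hsqrt : (Nat.sqrt ⁻¹' {m}).Finite :=
    (finite_Iio ((m + 1) ^ 2)).subset fun k (hk : Nat.sqrt k = m) => hk ▸ Nat.lt_succ_sqrt' k
  hsqrt.preimage' fun k _ => hφ.1 k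

lemma exists_mem_sqrt_mem_dist_lt (hφ : IsTalagrandPartition I φ) {A : Set ℕ} (hA : A.Infinite)
    (t : Icc (-1 : ℝ) 1) {ε : ℝ} (hε : 0 < ε) {B : Set ℕ} (hB : Bᶜ ∈ I) :
    ∃ i ∈ B, Nat.sqrt (φ i) ∈ A ∧ dist (gridPoint (φ i)) t < ε := by
  obtain ⟨k₀, hk₀⟩ := (hφ.2 _ hB).bddAbove
  obtain ⟨N, hN⟩ := exists_nat_gt (1 / ε)
  obtain ⟨m, hmA, hm⟩ := hA.exists_gt (max k₀ N)
  obtain ⟨k, hkm, hk⟩ := exists_sqrt_eq_dist_gridPoint_le t (m := m) (by omega)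
  have hk₀k : k₀ < k := (le_max_left k₀ N).trans_lt (hm.trans_le (hkm ▸ Nat.sqrt_le_self k))
  obtain ⟨i, hik : φ i = k, hiB⟩ := not_subset.1 fun h => (hk₀ h).not_gt hk₀k
  refine ⟨i, not_not.1 hiB, hik ▸ hkm ▸ hmA, hik ▸ hk.trans_lt ?_⟩
  have hm' : (0 : ℝ) < m := by exact_mod_cast (show 0 < m by omega)
  exact (one_div_lt hm' hε).2 (hN.trans (by exact_mod_cast (le_max_right k₀ N).trans_lt hm))

lemma exists_ultrafilter (hI : IsNatIdeal I) (hφ : IsTalagrandPartition I φ)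
    {V : Ultrafilter ℕ} (hV : V ∈ betaNRemainder) (t : Icc (-1 : ℝ) 1) :
    ∃ U ∈ PI I, U.map (Nat.sqrt ∘ φ) = V ∧ Tendsto (gridPoint ∘ φ) U (𝓝 t) := by
  set F := comap (Nat.sqrt ∘ φ) V ⊓ comap (gridPoint ∘ φ) (𝓝 t) ⊓ hI.dualFilter
  have : F.NeBot := by
    refine (((V : Filter ℕ).basis_sets.comap _).inf (Metric.nhds_basis_ball.comap _)).inf
      hI.dualFilter.basis_sets |>.neBot_iff.2 ?_
    rintro ⟨⟨A, ε⟩, B⟩ ⟨⟨hA, hε⟩, hB⟩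
    obtain ⟨i, hiB, hiA, hit⟩ :=
      hφ.exists_mem_sqrt_mem_dist_lt (mem_betaNRemainder_iff.1 hV A hA) t hε hB
    exact ⟨i, ⟨hiA, hit⟩, hiB⟩
  have hUF : ↑(Ultrafilter.of F) ≤ F := Ultrafilter.of_le F
  refine ⟨Ultrafilter.of F, fun A hA => hUF (mem_inf_of_right (hI.compl_mem_dualFilter hA)), ?_, ?_⟩
  · exact Ultrafilter.coe_le_coe.1
      (map_le_iff_le_comap.2 (hUF.trans (inf_le_left.trans inf_le_left)))
  · exact map_le_iff_le_comap.2 (hUF.trans (inf_le_left.trans inf_le_right))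

theorem exists_continuousMap_range_eq (hI : IsNatIdeal I) (hφ : IsTalagrandPartition I φ) :
    ∃ (π : C(PI I, betaNRemainder)) (θ : C(PI I, ℝ)),
      range (fun U => (π U, θ U)) = univ ×ˢ Icc (-1) 1 := by
  let θ := Ultrafilter.extend (gridPoint ∘ φ)
  refine ⟨⟨fun U => ⟨U.1.map (Nat.sqrt ∘ φ), Ultrafilter.map_mem_betaNRemainder
      hφ.finite_sqrt_comp_fiber (PI_subset_betaNRemainder hI U.2)⟩,
    ((Ultrafilter.continuous_map _).comp continuous_subtype_val).subtype_mk _⟩,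
    ⟨fun U => θ U.1, continuous_subtype_val.comp
      ((continuous_ultrafilter_extend _).comp continuous_subtype_val)⟩, ?_⟩
  refine Subset.antisymm (range_subset_iff.2 fun U => ⟨trivial, (θ U.1).2⟩) ?_
  rintro ⟨V, t⟩ ⟨-, ht⟩
  obtain ⟨U, hU, hUV, hUt⟩ := hφ.exists_ultrafilter hI V.2 ⟨t, ht⟩
  exact ⟨⟨U, hU⟩, Prod.ext (Subtype.ext hUV)
    (congrArg Subtype.val (ultrafilter_extend_eq_iff.2 hUt))⟩

end IsTalagrandPartition

lemma ContinuousMap.exists_norm_apply_eq_norm {X E : Type*} [TopologicalSpace X] [CompactSpace X]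
    [Nonempty X] [NormedAddCommGroup E] (g : C(X, E)) : ∃ x, ‖g x‖ = ‖g‖ := by
  obtain ⟨x, -, hx⟩ :=
    isCompact_univ.exists_isMaxOn univ_nonempty (map_continuous g).norm.continuousOn
  exact ⟨x, le_antisymm (g.norm_coe_le_norm x)
    ((g.norm_le (norm_nonneg _)).2 fun y => hx (mem_univ y))⟩

section WeightedComp

variable {X Y : Type*} [TopologicalSpace X] [TopologicalSpace Y]

def weightedComp (π : C(Y, X)) (θ : C(Y, ℝ)) : C(X, ℝ) →ₗ[ℝ] C(Y, ℝ) :=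
  LinearMap.mulRight ℝ θ ∘ₗ (ContinuousMap.compRightAlgHom ℝ ℝ π).toLinearMap

lemma weightedComp_apply (π : C(Y, X)) (θ : C(Y, ℝ)) (g : C(X, ℝ)) (y : Y) :
    weightedComp π θ g y = g (π y) * θ y :=
  rfl

variable {π : C(Y, X)} {θ : C(Y, ℝ)} (h : range (fun y => (π y, θ y)) = univ ×ˢ Icc (-1) 1)
include h

lemma exists_apply_eq_of_range_eq (x : X) {t : ℝ} (ht : t ∈ Icc (-1) 1) :
    ∃ y, π y = x ∧ θ y = t := by
  obtain ⟨y, hy⟩ : (x, t) ∈ range (fun y => (π y, θ y)) := h ▸ ⟨trivial, ht⟩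
  exact ⟨y, congrArg Prod.fst hy, congrArg Prod.snd hy⟩

variable [CompactSpace X] [CompactSpace Y]

lemma norm_weightedComp (g : C(X, ℝ)) : ‖weightedComp π θ g‖ = ‖g‖ := by
  refine le_antisymm ((ContinuousMap.norm_le _ (norm_nonneg g)).2 fun y => ?_)
    ((ContinuousMap.norm_le _ (norm_nonneg _)).2 fun x => ?_)
  · have hθ : ‖θ y‖ ≤ 1 := abs_le.2 (h.subset ⟨y, rfl⟩).2
    rw [weightedComp_apply, norm_mul]
    exact (mul_le_of_le_one_right (norm_nonneg _) hθ).trans (g.norm_coe_le_norm _)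
  · obtain ⟨y, rfl, hy⟩ := exists_apply_eq_of_range_eq h x (t := 1) (by norm_num)
    simpa [weightedComp_apply, hy] using (weightedComp π θ g).norm_coe_le_norm y

lemma range_weightedComp [Nonempty X] (g : C(X, ℝ)) :
    range (weightedComp π θ g) = Icc (-‖g‖) ‖g‖ := by
  refine Subset.antisymm (range_subset_iff.2 fun y => abs_le.1 ?_) fun s hs => ?_
  · exact norm_weightedComp h g ▸ (weightedComp π θ g).norm_coe_le_norm y
  obtain ⟨x, hx⟩ := g.exists_norm_apply_eq_norm
  rcases eq_or_ne (g x) 0 with hgx | hgx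
  · have hs0 : s = 0 := by
      rw [← hx, hgx, norm_zero, neg_zero, Icc_self, mem_singleton_iff] at hs
      exact hs
    obtain ⟨y, hy, -⟩ := exists_apply_eq_of_range_eq h x (t := 0) (by norm_num)
    exact ⟨y, by rw [weightedComp_apply, hy, hgx, zero_mul, hs0]⟩
  · have ht : s / g x ∈ Icc (-1) 1 := by
      rw [mem_Icc, ← abs_le, abs_div, div_le_one (abs_pos.2 hgx), ← Real.norm_eq_abs (g x), hx]
      exact abs_le.2 hs
    obtain ⟨y, hy, hyt⟩ := exists_apply_eq_of_range_eq h x ht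
    exact ⟨y, by rw [weightedComp_apply, hy, hyt, mul_div_cancel₀ s hgx]⟩

end WeightedComp

/-- If an ideal `I` on `ℕ` has the Baire property, then the set of functions
in `C(P_I, ℝ)` whose range is a (nondegenerate closed) interval contains, up to the zero
function, a subspace isometric to `C(βℕ∖ℕ, ℝ)`. -/
theorem stmt11 (I : Set (Set ℕ)) (hI : IsNatIdeal I) (hBP : IdealHasBaireProperty I) :
    ∃ T : C(↥betaNRemainder, ℝ) →ₗᵢ[ℝ] C(↥(PI I), ℝ),
      ∀ g : C(↥betaNRemainder, ℝ), g ≠ 0 →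
        ∃ a b : ℝ, a < b ∧ Set.range (T g) = Set.Icc a b := by
  obtain ⟨φ, hφ⟩ := exists_isTalagrandPartition hI (hI.isMeagre_of_hasBaireProperty hBP)
  obtain ⟨π, θ, h⟩ := hφ.exists_continuousMap_range_eq hI
  refine ⟨⟨weightedComp π θ, norm_weightedComp h⟩, fun g hg =>
    ⟨-‖g‖, ‖g‖, neg_lt_self (norm_pos_iff.2 hg), range_weightedComp h g⟩⟩
end

section
/- Let 𝒫 : Set (Set ℝ) be a family of compact subsets of ℝ with {0} ∉ 𝒫, and let κ be a cardinal. Then the set {f ∈ C(βℕ∖ℕ, ℝ) | Set.range f ∈ 𝒫} is κ-lineable in C(βℕ∖ℕ, ℝ) if and only if the set {x ∈ ℓ∞ | Lim(x) ∈ 𝒫} is κ-lineable in ℓ∞. -/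
open scoped ENNReal

/-- The set of cluster points of a bounded sequence `x ∈ ℓ∞`. -/
def LimSet (x : lp (fun _ : ℕ => ℝ) ∞) : Set ℝ :=
  {t : ℝ | ∀ ε > (0 : ℝ), {n : ℕ | |x n - t| < ε}.Infinite}

/-- A subset `M` of a real normed space `X` is `κ`-lineable if `M ∪ {0}` contains a linear
subspace of dimension `κ`. -/
def Lineable {X : Type} [NormedAddCommGroup X] [NormedSpace ℝ X]
    (M : Set X) (κ : Cardinal) : Prop :=
  ∃ V : Submodule ℝ X, Module.rank ℝ ↥V = κ ∧ (V : Set X) ⊆ M ∪ {0}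

/-!
A bounded sequence `x` extends continuously to `βℕ`; restricting the extension to `βℕ∖ℕ`, i.e.
`x ↦ (u ↦ lim_u x)`, is a linear map `ℓ∞ → C(βℕ∖ℕ, ℝ)`, onto by Tietze's theorem. The cluster
points of `x` are exactly its limits along nonprincipal ultrafilters, so the value set of the image
of `x` is `Lim(x)` and the set in `ℓ∞` is the preimage of the set in `C(βℕ∖ℕ, ℝ)`. A linear
surjection pulls lineable sets back through a linear right inverse, and pushes them forward as
soon as the target set misses `0`, for then it is injective on the subspace; `{0} ∉ 𝒫` says
exactly that the zero function is not in the set.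
-/

open Filter Topology

local notation "ℓ∞" => lp (fun _ : ℕ => ℝ) ∞

section Lineable

variable {X Y : Type} [NormedAddCommGroup X] [NormedSpace ℝ X] [NormedAddCommGroup Y]
  [NormedSpace ℝ Y] {T : X →ₗ[ℝ] Y} {M : Set Y} {κ : Cardinal}

theorem Lineable.preimage_of_surjective (hT : Function.Surjective T) (h : Lineable M κ) :
    Lineable (T ⁻¹' M) κ := by
  obtain ⟨V, hrank, hV⟩ := h
  obtain ⟨S, hS⟩ := T.exists_rightInverse_of_surjective (LinearMap.range_eq_top.2 hT)
  have hTS : ∀ y, T (S y) = y := LinearMap.congr_fun hS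
  refine ⟨V.map S, by rw [rank_map_eq (Function.LeftInverse.injective hTS), hrank], ?_⟩
  rintro _ ⟨y, hy, rfl⟩
  rcases hV hy with hyM | rfl
  · exact Or.inl (by rwa [Set.mem_preimage, hTS])
  · exact Or.inr (map_zero S)

theorem Lineable.of_preimage (hM : (0 : Y) ∉ M) (h : Lineable (T ⁻¹' M) κ) : Lineable M κ := by
  obtain ⟨V, hrank, hV⟩ := h
  have hinj : Function.Injective (T ∘ₗ V.subtype) := by
    refine (injective_iff_map_eq_zero _).2 fun x hx => ?_
    rcases hV x.2 with hxM | hx0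
    · exact absurd (hx ▸ hxM : (0 : Y) ∈ M) hM
    · exact Subtype.ext hx0
  refine ⟨V.map T, ?_, ?_⟩
  · rw [← hrank, ← rank_range_of_injective _ hinj, LinearMap.range_comp, Submodule.range_subtype]
  · rintro _ ⟨x, hx, rfl⟩
    rcases hV hx with hxM | rfl
    · exact Or.inl hxM
    · exact Or.inr (map_zero T)

theorem lineable_preimage_iff (hT : Function.Surjective T) (hM : (0 : Y) ∉ M) :
    Lineable (T ⁻¹' M) κ ↔ Lineable M κ :=
  ⟨Lineable.of_preimage hM, Lineable.preimage_of_surjective hT⟩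

end Lineable

section UltrafilterLimit

variable {α E : Type*} [MetricSpace E] [ProperSpace E]

theorem exists_continuous_tendsto_ultrafilter {x : α → E}
    (hx : Bornology.IsBounded (Set.range x)) :
    ∃ g : Ultrafilter α → E, Continuous g ∧ ∀ u : Ultrafilter α, Tendsto x u (𝓝 (g u)) := by
  have : CompactSpace (closure (Set.range x)) :=
    isCompact_iff_compactSpace.1 hx.isCompact_closure
  let y : α → closure (Set.range x) := fun a => ⟨x a, subset_closure ⟨a, rfl⟩⟩
  refine ⟨Subtype.val ∘ Ultrafilter.extend y, continuous_subtype_val.comp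
    (continuous_ultrafilter_extend y), fun u => ?_⟩
  exact (continuous_subtype_val.tendsto _).comp (ultrafilter_extend_eq_iff.1 rfl)

theorem tendsto_limUnder_ultrafilter [Nonempty E] {x : α → E}
    (hx : Bornology.IsBounded (Set.range x)) (u : Ultrafilter α) :
    Tendsto x u (𝓝 (limUnder (u : Filter α) x)) :=
  have ⟨g, _, hg⟩ := exists_continuous_tendsto_ultrafilter hx
  tendsto_nhds_limUnder ⟨g u, hg u⟩

theorem continuous_limUnder_ultrafilter [Nonempty E] {x : α → E}
    (hx : Bornology.IsBounded (Set.range x)) :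
    Continuous fun u : Ultrafilter α => limUnder (u : Filter α) x := by
  obtain ⟨g, hg, hgx⟩ := exists_continuous_tendsto_ultrafilter hx
  simpa only [fun u => (hgx u).limUnder_eq] using hg

end UltrafilterLimit

theorem lp.isBounded_range_infty (x : ℓ∞) : Bornology.IsBounded (Set.range x) :=
  isBounded_iff_forall_norm_le.2
    ⟨‖x‖, by rintro _ ⟨n, rfl⟩; exact lp.norm_apply_le_norm ENNReal.top_ne_zero x n⟩

theorem mem_betaNRemainder_iff_s14 (u : Ultrafilter ℕ) :
    u ∈ betaNRemainder ↔ (u : Filter ℕ) ≤ cofinite := by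
  refine ⟨fun hu => ?_, ?_⟩
  · rcases u.le_cofinite_or_eq_pure with h | ⟨a, rfl⟩
    · exact h
    · exact absurd ⟨a, rfl⟩ hu
  · rintro h ⟨a, rfl⟩
    exact Ultrafilter.mem_pure.1 (h (Set.finite_singleton a).compl_mem_cofinite) rfl

instance inst_s14 : Nonempty betaNRemainder :=
  ⟨⟨hyperfilter ℕ, (mem_betaNRemainder_iff_s14 _).2 hyperfilter_le_cofinite⟩⟩

theorem mem_LimSet_iff_mapClusterPt (x : ℓ∞) (t : ℝ) :
    t ∈ LimSet x ↔ MapClusterPt t cofinite x := by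
  simp only [Metric.nhds_basis_ball.mapClusterPt_iff_frequently, frequently_cofinite_iff_infinite,
    Metric.mem_ball, Real.dist_eq]
  rfl

noncomputable def limOnRemainder : ℓ∞ →ₗ[ℝ] C(betaNRemainder, ℝ) where
  toFun x := ⟨fun u => limUnder (u.1 : Filter ℕ) x,
    (continuous_limUnder_ultrafilter (lp.isBounded_range_infty x)).comp continuous_subtype_val⟩
  map_add' x y := by
    ext u
    refine Tendsto.limUnder_eq ?_
    rw [lp.coeFn_add]
    exact (tendsto_limUnder_ultrafilter (lp.isBounded_range_infty x) u.1).add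
      (tendsto_limUnder_ultrafilter (lp.isBounded_range_infty y) u.1)
  map_smul' c x := by
    ext u
    refine Tendsto.limUnder_eq ?_
    rw [lp.coeFn_smul]
    exact (tendsto_limUnder_ultrafilter (lp.isBounded_range_infty x) u.1).const_smul c

theorem range_limOnRemainder (x : ℓ∞) : Set.range (limOnRemainder x) = LimSet x := by
  ext t
  rw [mem_LimSet_iff_mapClusterPt, mapClusterPt_iff_ultrafilter]
  constructor
  · rintro ⟨u, rfl⟩
    exact ⟨u, (mem_betaNRemainder_iff_s14 _).1 u.2,
      tendsto_limUnder_ultrafilter (lp.isBounded_range_infty x) u.1⟩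
  · rintro ⟨u, hu, hxt⟩
    exact ⟨⟨u, (mem_betaNRemainder_iff_s14 u).2 hu⟩, hxt.limUnder_eq⟩

theorem limOnRemainder_surjective : Function.Surjective limOnRemainder := by
  intro f
  obtain ⟨h, rfl⟩ := ContinuousMap.exists_restrict_eq isOpen_range_pure.isClosed_compl f
  have hmem : Memℓp (fun n => h (pure n)) ∞ :=
    memℓp_infty ⟨‖h‖, by rintro _ ⟨n, rfl⟩; exact h.norm_coe_le_norm (pure n)⟩
  refine ⟨⟨fun n => h (pure n), hmem⟩, ContinuousMap.ext fun u => ?_⟩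
  exact ((h.continuous.tendsto u.1).comp (Ultrafilter.tendsto_pure_self u.1)).limUnder_eq

theorem stmt14_general (Pfam : Set (Set ℝ))
    (h0 : ({0} : Set ℝ) ∉ Pfam) (κ : Cardinal) :
    Lineable {f : C(↥betaNRemainder, ℝ) | Set.range f ∈ Pfam} κ ↔
      Lineable {x : lp (fun _ : ℕ => ℝ) ∞ | LimSet x ∈ Pfam} κ := by
  have hzero : (0 : C(betaNRemainder, ℝ)) ∉ {f : C(betaNRemainder, ℝ) | Set.range f ∈ Pfam} := by
    simpa [Set.range_const] using h0
  have hpreimage : limOnRemainder ⁻¹' {f | Set.range f ∈ Pfam} = {x | LimSet x ∈ Pfam} := by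
    ext x
    simp only [Set.mem_preimage, Set.mem_ofPred_eq, range_limOnRemainder]
  rw [← hpreimage]
  exact (lineable_preimage_iff limOnRemainder_surjective hzero).symm

/-- For a family `𝒫` of compact subsets of `ℝ` with `{0} ∉ 𝒫` and a cardinal
`κ`, the set of `f ∈ C(βℕ∖ℕ, ℝ)` with `range f ∈ 𝒫` is `κ`-lineable iff the set of
`x ∈ ℓ∞` with `Lim(x) ∈ 𝒫` is `κ`-lineable. -/
theorem stmt14 (Pfam : Set (Set ℝ)) (hPcompact : ∀ P ∈ Pfam, IsCompact P)
    (h0 : ({0} : Set ℝ) ∉ Pfam) (κ : Cardinal) :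
    Lineable {f : C(↥betaNRemainder, ℝ) | Set.range f ∈ Pfam} κ ↔
      Lineable {x : lp (fun _ : ℕ => ℝ) ∞ | LimSet x ∈ Pfam} κ :=
  stmt14_general Pfam h0 κ
end
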